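/- arXiv:1503.05049 — 2 statements merged into one kernel-verified Lean document; each statement's English description precedes it below -/
import Mathlib

section
/- Let m ≥ 1 be an integer and let e be a tame Coxeter frieze pattern of width m over ℝ. Set x_k := e(0, k-1) for 0 ≤ k ≤ m+1 (the entries of the 0-th South-East diagonal, so x_0 = x_{m+1} = 1), and assume x_k ≠ 0 for 1 ≤ k ≤ m. Then for all integers i, j with 1 ≤ i ≤ j ≤ m: e(i,j) = x_{i-1} · x_{j+1} · ( 1/(x_{i-1}·x_i) + 1/(x_i·x_{i+1}) + ⋯ + 1/(x_j·x_{j+1}) ), i.e. e(i,j) = x_{i-1}·x_{j+1}·Σ_{k=i-1}^{j} 1/(x_k·x_{k+1}). -/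
/-!
In a tame SL₂-tiling the columns satisfy `C j + C (j + 2) = c j • C (j + 1)`: tameness and
unimodularity carry such a relation from two consecutive rows to all rows, and unimodularity of
rows `0, 1` forces the outer coefficients to be `1`. Every row is therefore determined by two
consecutive entries, and the frieze boundary `e i (i - 2) = 0`, `e i (i - 1) = 1` identifies
row `i` with the minor `e 0 (i - 2) * e 1 j - e 1 (i - 2) * e 0 j`. Dividing the unimodular rule
for rows `0, 1` by `e 0 j * e 0 (j + 1)` shows that `e 1 j / e 0 j` telescopes, which turns this
minor into the sum of the Laurent formula.
-/

open Finset

theorem Int.two_step_induction {P : ℤ → Prop} {k : ℤ} (hk : P k) (hk' : P (k + 1))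
    (hsucc : ∀ n, P n → P (n + 1) → P (n + 2)) (hpred : ∀ n, P (n + 1) → P (n + 2) → P n)
    (n : ℤ) : P n := by
  suffices P n ∧ P (n + 1) from this.1
  induction n using Int.inductionOn' (b := k) with
  | zero => exact ⟨hk, hk'⟩
  | succ n _ ih => exact ⟨ih.2, by rw [add_assoc, one_add_one_eq_two]; exact hsucc n ih.1 ih.2⟩
  | pred n _ ih =>
    rw [sub_add_cancel]
    exact ⟨hpred _ (by rw [sub_add_cancel]; exact ih.1)
      (by rw [show n - 1 + 2 = n + 1 by ring]; exact ih.2), ih.1⟩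

section CommRing

variable {R : Type*} [CommRing R]

theorem eq_zero_of_recurrence {c f : ℤ → R} (hf : ∀ j, f j + f (j + 2) = c j * f (j + 1))
    {k : ℤ} (hk : f k = 0) (hk' : f (k + 1) = 0) (j : ℤ) : f j = 0 :=
  Int.two_step_induction (P := fun n => f n = 0) hk hk'
    (fun n h0 h1 => by linear_combination hf n - h0 + c n * h1)
    (fun n h1 h2 => by linear_combination hf n - h2 + c n * h1) j

def IsSL2Tiling (e : ℤ → ℤ → R) : Prop :=
  ∀ i j : ℤ, e i j * e (i + 1) (j + 1) - e i (j + 1) * e (i + 1) j = 1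

def IsTame (e : ℤ → ℤ → R) : Prop :=
  ∀ i j : ℤ, Matrix.det (Matrix.of fun r c : Fin 3 => e (i + (r : ℕ)) (j + (c : ℕ))) = 0

variable {e : ℤ → ℤ → R}

theorem IsTame.det_eq_zero (ht : IsTame e) (i j : ℤ) :
    e i j * e (i + 1) (j + 1) * e (i + 2) (j + 2) - e i j * e (i + 1) (j + 2) * e (i + 2) (j + 1)
      - e i (j + 1) * e (i + 1) j * e (i + 2) (j + 2) + e i (j + 1) * e (i + 1) (j + 2) * e (i + 2) j
      + e i (j + 2) * e (i + 1) j * e (i + 2) (j + 1)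
      - e i (j + 2) * e (i + 1) (j + 1) * e (i + 2) j = 0 := by
  have h := ht i j
  rw [Matrix.det_fin_three] at h
  simpa using h

/- The determinant of columns `j, j + 1, j + 2` equals that of `j, j + 1` and the defect column
`e · j + e · (j + 2) - c * e · (j + 1)`; expanding along the defect column, a vanishing defect in
two of the three rows forces it in the third, the cofactor being a 2 × 2 minor equal to `1`. -/
theorem IsSL2Tiling.column_relation_add_two (he : IsSL2Tiling e) (ht : IsTame e) {i j : ℤ} {c : R}
    (h₀ : e i j + e i (j + 2) = c * e i (j + 1))
    (h₁ : e (i + 1) j + e (i + 1) (j + 2) = c * e (i + 1) (j + 1)) :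
    e (i + 2) j + e (i + 2) (j + 2) = c * e (i + 2) (j + 1) := by
  linear_combination ht.det_eq_zero i j
    - (e (i + 1) j * e (i + 2) (j + 1) - e (i + 1) (j + 1) * e (i + 2) j) * h₀
    + (e i j * e (i + 2) (j + 1) - e i (j + 1) * e (i + 2) j) * h₁
    - (e (i + 2) j + e (i + 2) (j + 2) - c * e (i + 2) (j + 1)) * he i j

theorem IsSL2Tiling.column_relation_of_add_two (he : IsSL2Tiling e) (ht : IsTame e) {i j : ℤ}
    {c : R} (h₁ : e (i + 1) j + e (i + 1) (j + 2) = c * e (i + 1) (j + 1))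
    (h₂ : e (i + 2) j + e (i + 2) (j + 2) = c * e (i + 2) (j + 1)) :
    e i j + e i (j + 2) = c * e i (j + 1) := by
  have hM := he (i + 1) j
  rw [add_assoc, one_add_one_eq_two] at hM
  linear_combination ht.det_eq_zero i j
    + (e i j * e (i + 2) (j + 1) - e i (j + 1) * e (i + 2) j) * h₁
    - (e i j * e (i + 1) (j + 1) - e i (j + 1) * e (i + 1) j) * h₂
    - (e i j + e i (j + 2) - c * e i (j + 1)) * hM

theorem IsSL2Tiling.exists_column_recurrence (he : IsSL2Tiling e) (ht : IsTame e) (j : ℤ) :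
    ∃ c, ∀ i, e i j + e i (j + 2) = c * e i (j + 1) := by
  have h₀ := he 0 j
  have h₁ := he 0 (j + 1)
  rw [zero_add] at h₀ h₁
  rw [add_assoc, one_add_one_eq_two] at h₁
  exact ⟨e 0 j * e 1 (j + 2) - e 1 j * e 0 (j + 2), Int.two_step_induction (k := 0)
    (by linear_combination (-e 0 (j + 2)) * h₀ - e 0 j * h₁)
    (by rw [zero_add]; linear_combination (-e 1 (j + 2)) * h₀ - e 1 j * h₁)
    (fun _ => he.column_relation_add_two ht) (fun _ => he.column_relation_of_add_two ht)⟩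

theorem IsSL2Tiling.entry_eq_minor (he : IsSL2Tiling e) (ht : IsTame e) {i l : ℤ}
    (h0 : e i l = 0) (h1 : e i (l + 1) = 1) (k j : ℤ) :
    e i j = e k l * e (k + 1) j - e (k + 1) l * e k j := by
  choose c hc using he.exists_column_recurrence ht
  rw [← sub_eq_zero]
  refine eq_zero_of_recurrence (c := c)
    (f := fun j => e i j - (e k l * e (k + 1) j - e (k + 1) l * e k j))
    (fun j => ?_) (k := l) ?_ ?_ j
  · linear_combination hc j i - e k l * hc j (k + 1) + e (k + 1) l * hc j k
  · simp only [h0]; ring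
  · linear_combination h1 - he k l

end CommRing

theorem IsSL2Tiling.minor_eq_mul_sum {F : Type*} [Field F] {e : ℤ → ℤ → F} (he : IsSL2Tiling e)
    {k l j : ℤ} (hlj : l ≤ j) (hne : ∀ t ∈ Icc l j, e k t ≠ 0) :
    e k l * e (k + 1) j - e (k + 1) l * e k j =
      e k l * e k j * ∑ t ∈ Icc (l + 1) j, 1 / (e k (t - 1) * e k t) := by
  induction j, hlj using Int.leInduction with
  | base => rw [Icc_eq_empty (by omega), sum_empty, mul_zero]; ring
  | succ j hlj ih =>
    have hj : e k j ≠ 0 := hne j (mem_Icc.2 ⟨hlj, by omega⟩)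
    have hj' : e k (j + 1) ≠ 0 := hne (j + 1) (mem_Icc.2 ⟨by omega, le_rfl⟩)
    have ih := ih fun t ht => hne t (by simp only [mem_Icc] at ht ⊢; omega)
    rw [← insert_Icc_right_eq_Icc_add_one (by omega), sum_insert (by simp), add_sub_cancel_right]
    field_simp
    linear_combination e k l * he k j + e k (j + 1) * ih

theorem coxeter_frieze_laurent_formula_general (m : ℕ) (e : ℤ → ℤ → ℝ)
    (hb0 : ∀ i : ℤ, e i (i - 2) = 0)
    (hb1 : ∀ i : ℤ, e i (i - 1) = 1)
    (hb2 : ∀ i : ℤ, e i (i + m) = 1)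
    (huni : ∀ i j : ℤ,
      e i j * e (i + 1) (j + 1) - e i (j + 1) * e (i + 1) j = 1)
    (htame : ∀ i j : ℤ,
      Matrix.det (Matrix.of fun r c : Fin 3 =>
        e (i + (r : ℕ)) (j + (c : ℕ))) = 0)
    (x : ℤ → ℝ) (hx : ∀ k : ℤ, x k = e 0 (k - 1))
    (hxne : ∀ k : ℤ, 1 ≤ k → k ≤ (m : ℤ) → x k ≠ 0) :
    ∀ i j : ℤ, 1 ≤ i → i ≤ j → j ≤ (m : ℤ) →
      e i j = x (i - 1) * x (j + 1) *
        ∑ k ∈ Finset.Icc (i - 1) j, 1 / (x k * x (k + 1)) := by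
  intro i j hi hij hjm
  have he : IsSL2Tiling e := huni
  have hne : ∀ t ∈ Icc (-1) (m : ℤ), e 0 t ≠ 0 := by
    intro t ht
    obtain ⟨ht₀, htm⟩ := mem_Icc.1 ht
    rcases ht₀.eq_or_lt with rfl | ht₀
    · simpa using (hb1 0).trans_ne one_ne_zero
    rcases htm.eq_or_lt with rfl | htm
    · simpa using (hb2 0).trans_ne one_ne_zero
    simpa [hx] using hxne (t + 1) (by omega) (by omega)
  have hrow : e i (i - 2 + 1) = 1 := by rw [show i - 2 + 1 = i - 1 by ring]; exact hb1 i
  rw [he.entry_eq_minor htame (hb0 i) hrow 0 j,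
    he.minor_eq_mul_sum (by omega) fun t ht => hne t (by simp only [mem_Icc] at ht ⊢; omega)]
  simp only [hx, add_sub_cancel_right, show i - 2 + 1 = i - 1 by ring,
    show i - 1 - 1 = i - 2 by ring]

/-- **Laurent expression for Coxeter frieze entries along a diagonal.**
Let `e` be a tame Coxeter frieze pattern of width `m ≥ 1` over `ℝ`, and let
`x k = e 0 (k-1)` (entries of the `0`-th South-East diagonal, `x 0 = x (m+1) = 1`),
assumed nonzero for `1 ≤ k ≤ m`.  Then for `1 ≤ i ≤ j ≤ m`:
`e i j = x (i-1) * x (j+1) * ∑_{k=i-1}^{j} 1 / (x k * x (k+1))`. -/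
theorem coxeter_frieze_laurent_formula (m : ℕ) (hm : 1 ≤ m) (e : ℤ → ℤ → ℝ)
    (hb0 : ∀ i : ℤ, e i (i - 2) = 0)
    (hb1 : ∀ i : ℤ, e i (i - 1) = 1)
    (hb2 : ∀ i : ℤ, e i (i + m) = 1)
    (hb3 : ∀ i : ℤ, e i (i + m + 1) = 0)
    (huni : ∀ i j : ℤ,
      e i j * e (i + 1) (j + 1) - e i (j + 1) * e (i + 1) j = 1)
    (htame : ∀ i j : ℤ,
      Matrix.det (Matrix.of fun r c : Fin 3 =>
        e (i + (r : ℕ)) (j + (c : ℕ))) = 0)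
    (x : ℤ → ℝ) (hx : ∀ k : ℤ, x k = e 0 (k - 1))
    (hxne : ∀ k : ℤ, 1 ≤ k → k ≤ (m : ℤ) → x k ≠ 0) :
    ∀ i j : ℤ, 1 ≤ i → i ≤ j → j ≤ (m : ℤ) →
      e i j = x (i - 1) * x (j + 1) *
        ∑ k ∈ Finset.Icc (i - 1) j, 1 / (x k * x (k + 1)) :=
  coxeter_frieze_laurent_formula_general m e hb0 hb1 hb2 huni htame x hx hxne
end

section
/- Let m ≥ 1 be an integer, let e be a tame Coxeter frieze pattern of width m over ℝ, and set x_k := e(0, k-1) for 0 ≤ k ≤ m+1 (so x_0 = x_{m+1} = 1). Then all interior entries of the frieze are positive integers (i.e. e(i,j) is a positive integer for all i,j ∈ ℤ with i ≤ j ≤ i+m-1) if and only if x_1, …, x_m are positive integers such that x_k divides x_{k-1} + x_{k+1} in ℤ for every 1 ≤ k ≤ m. -/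
/-!
Unimodularity and tameness force every row `j ↦ e i j` to satisfy the recurrence
`u j + u (j + 2) = a (j + 2) * u (j + 1)`, where `a k = e k k`, and every column the analogous
recurrence with coefficients `a i`; with the boundary conditions this makes `e` invariant under
`(i, j) ↦ (i + m + 3, j + m + 3)`. On row `0` the recurrence reads
`x (k - 1) + x (k + 1) = a k * x k`, which gives the divisibility conditions when the frieze is
integral and, conversely, shows that the divisibility conditions make `a 0, …, a (m + 2)`, hence by
periodicity all of `a`, hence every entry, integral. Positivity passes from row `i` to row `i + 1`
because the minors `e i a * e (i + 1) b - e i b * e (i + 1) a` (`a < b`) of two consecutive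
rows are positive as long as row `i` is, and for `a = i - 1` they are the entries of row `i + 1`.
-/

theorem Function.Periodic.map_emod {β : Type*} {f : ℤ → β} {n : ℤ} (h : Function.Periodic f n)
    (k : ℤ) : f (k % n) = f k := by
  rw [Int.emod_def, mul_comm]
  exact h.sub_int_mul_eq _

theorem eq_of_recurrence {a u v : ℤ → ℝ}
    (hu : ∀ j, u j + u (j + 2) = a j * u (j + 1))
    (hv : ∀ j, v j + v (j + 2) = a j * v (j + 1))
    {j₀ : ℤ} (h₀ : u j₀ = v j₀) (h₁ : u (j₀ + 1) = v (j₀ + 1)) : u = v := by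
  suffices h : ∀ j, u j = v j ∧ u (j + 1) = v (j + 1) from funext fun j => (h j).1
  intro j
  refine Int.inductionOn' j j₀ ⟨h₀, h₁⟩ (fun j _ ih => ?_) (fun j _ ih => ?_)
  · refine ⟨ih.2, ?_⟩
    rw [add_assoc, one_add_one_eq_two]
    linear_combination hu j - hv j - ih.1 + a j * ih.2
  · have hu' := hu (j - 1)
    have hv' := hv (j - 1)
    rw [sub_add_cancel, show j - 1 + 2 = j + 1 by ring] at hu' hv'
    refine ⟨?_, by rw [sub_add_cancel]; exact ih.1⟩
    linear_combination hu' - hv' - ih.2 + a (j - 1) * ih.1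

theorem mul_sub_mul_pos_of_unimodular {u v : ℤ → ℝ}
    (huv : ∀ j, u j * v (j + 1) - u (j + 1) * v j = 1) {a b : ℤ} (hab : a < b)
    (hu : ∀ j, a ≤ j → j ≤ b → 0 < u j) : 0 < u a * v b - u b * v a := by
  induction b, hab using Int.leInduction with
  | base => rw [huv]; exact one_pos
  | succ b hab ih =>
    have hD := ih fun j hj₁ hj₂ => hu j hj₁ (by omega)
    have key : (u a * v (b + 1) - u (b + 1) * v a) * u b =
        (u a * v b - u b * v a) * u (b + 1) + u a := by
      linear_combination u a * huv b
    refine (mul_pos_iff_of_pos_right (hu b (by omega) (by omega))).1 ?_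
    rw [key]
    exact add_pos (mul_pos hD (hu (b + 1) (by omega) le_rfl)) (hu a le_rfl (by omega))

section Frieze

variable {m : ℕ} {e : ℤ → ℤ → ℝ}

def rowCoeff (e : ℤ → ℤ → ℝ) (i j : ℤ) : ℝ :=
  e i j * e (i + 1) (j + 2) - e i (j + 2) * e (i + 1) j

theorem add_eq_rowCoeff_mul_of_unimodular
    (huni : ∀ i j : ℤ, e i j * e (i + 1) (j + 1) - e i (j + 1) * e (i + 1) j = 1) (i j : ℤ) :
    e i j + e i (j + 2) = rowCoeff e i j * e i (j + 1) ∧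
      e (i + 1) j + e (i + 1) (j + 2) = rowCoeff e i j * e (i + 1) (j + 1) := by
  have h₁ := huni i (j + 1)
  rw [add_assoc, one_add_one_eq_two] at h₁
  unfold rowCoeff
  constructor
  · linear_combination (-e i j) * h₁ - e i (j + 2) * huni i j
  · linear_combination (-e (i + 1) (j + 2)) * huni i j - e (i + 1) j * h₁

theorem add_eq_rowCoeff_mul_of_tame
    (huni : ∀ i j : ℤ, e i j * e (i + 1) (j + 1) - e i (j + 1) * e (i + 1) j = 1)
    (htame : ∀ i j : ℤ,
      Matrix.det (Matrix.of fun r c : Fin 3 => e (i + (r : ℕ)) (j + (c : ℕ))) = 0) (i j : ℤ) :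
    e (i + 2) j + e (i + 2) (j + 2) = rowCoeff e i j * e (i + 2) (j + 1) := by
  have h₁ := huni i (j + 1)
  rw [add_assoc, one_add_one_eq_two] at h₁
  have hdet := htame i j
  simp only [Matrix.det_fin_three, Matrix.of_apply, Fin.val_zero, Fin.val_one, Fin.val_two,
    Nat.cast_zero, Nat.cast_one, Nat.cast_ofNat, add_zero] at hdet
  unfold rowCoeff
  linear_combination hdet - e (i + 2) (j + 2) * huni i j - e (i + 2) j * h₁

theorem rowCoeff_succ
    (huni : ∀ i j : ℤ, e i j * e (i + 1) (j + 1) - e i (j + 1) * e (i + 1) j = 1)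
    (htame : ∀ i j : ℤ,
      Matrix.det (Matrix.of fun r c : Fin 3 => e (i + (r : ℕ)) (j + (c : ℕ))) = 0) (i j : ℤ) :
    rowCoeff e (i + 1) j = rowCoeff e i j := by
  obtain ⟨-, h₁⟩ := add_eq_rowCoeff_mul_of_unimodular huni i j
  obtain ⟨h₁', h₂'⟩ := add_eq_rowCoeff_mul_of_unimodular huni (i + 1) j
  have h₂ := add_eq_rowCoeff_mul_of_tame huni htame i j
  rw [add_assoc, one_add_one_eq_two] at h₂'
  -- rows `i + 1`, `i + 2` obey both relations, and by unimodularity do not both vanish at `j + 1`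
  have hd₁ : (rowCoeff e (i + 1) j - rowCoeff e i j) * e (i + 1) (j + 1) = 0 := by
    linear_combination h₁ - h₁'
  have hd₂ : (rowCoeff e (i + 1) j - rowCoeff e i j) * e (i + 2) (j + 1) = 0 := by
    linear_combination h₂ - h₂'
  by_contra hne
  have hu := huni (i + 1) j
  rw [add_assoc, one_add_one_eq_two, (mul_eq_zero.1 hd₁).resolve_left (sub_ne_zero.2 hne),
    (mul_eq_zero.1 hd₂).resolve_left (sub_ne_zero.2 hne)] at hu
  simp at hu

theorem frieze_row_recurrence (hb0 : ∀ i : ℤ, e i (i - 2) = 0) (hb1 : ∀ i : ℤ, e i (i - 1) = 1)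
    (huni : ∀ i j : ℤ, e i j * e (i + 1) (j + 1) - e i (j + 1) * e (i + 1) j = 1)
    (htame : ∀ i j : ℤ,
      Matrix.det (Matrix.of fun r c : Fin 3 => e (i + (r : ℕ)) (j + (c : ℕ))) = 0) (i j : ℤ) :
    e i j + e i (j + 2) = e (j + 2) (j + 2) * e i (j + 1) := by
  have hconst : Function.Periodic (fun i => rowCoeff e i j) 1 :=
    fun i => rowCoeff_succ huni htame i j
  have hdiag := (add_eq_rowCoeff_mul_of_unimodular huni (j + 2) j).1
  rw [show j + 1 = j + 2 - 1 by ring, hb1] at hdiag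
  rw [show e (j + 2) j = 0 by simpa using hb0 (j + 2)] at hdiag
  have key : rowCoeff e i j = e (j + 2) (j + 2) := by
    have := (hconst.int_mul_eq i).trans (hconst.int_mul_eq (j + 2)).symm
    simp only [Int.cast_id, mul_one] at this
    linarith
  rw [(add_eq_rowCoeff_mul_of_unimodular huni i j).1, key]

theorem frieze_col_recurrence (hb0 : ∀ i : ℤ, e i (i - 2) = 0) (hb1 : ∀ i : ℤ, e i (i - 1) = 1)
    (hrow : ∀ i j : ℤ, e i j + e i (j + 2) = e (j + 2) (j + 2) * e i (j + 1)) (i j : ℤ) :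
    e i j + e (i + 2) j = e i i * e (i + 1) j := by
  refine congrFun (eq_of_recurrence (a := fun j => e (j + 2) (j + 2))
    (u := fun j => e i j + e (i + 2) j) (v := fun j => e i i * e (i + 1) j)
    (fun j => by linear_combination hrow i j + hrow (i + 2) j)
    (fun j => by linear_combination e i i * hrow (i + 1) j) (j₀ := i) ?_ ?_) j
  · simp only [show e (i + 2) i = 0 by simpa using hb0 (i + 2),
      show e (i + 1) i = 1 by simpa using hb1 (i + 1), add_zero, mul_one]
  · have h := hrow i (i - 1)
    rw [hb1, show i - 1 + 2 = i + 1 by ring, sub_add_cancel] at h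
    simp only [show e (i + 2) (i + 1) = 1 by simpa [add_sub_assoc] using hb1 (i + 2)]
    linarith

theorem frieze_row_antiperiodic (hb0 : ∀ i : ℤ, e i (i - 2) = 0)
    (hb1 : ∀ i : ℤ, e i (i - 1) = 1) (hb2 : ∀ i : ℤ, e i (i + m) = 1)
    (hb3 : ∀ i : ℤ, e i (i + m + 1) = 0)
    (hrow : ∀ i j : ℤ, e i j + e i (j + 2) = e (j + 2) (j + 2) * e i (j + 1)) (i j : ℤ) :
    e (i + m + 3) j = -e i j := by
  refine congrFun (eq_of_recurrence (a := fun j => e (j + 2) (j + 2))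
    (u := fun j => e (i + m + 3) j) (v := fun j => -e i j)
    (fun j => hrow _ j) (fun j => by linear_combination -hrow i j) (j₀ := i + m + 1) ?_ ?_) j
  · rw [hb3, neg_zero, show i + m + 1 = i + m + 3 - 2 by ring, hb0]
  · have h := hrow i (i + m)
    rw [hb2, hb3, mul_zero, show i + m + 2 = i + m + 1 + 1 by ring] at h
    rw [show i + m + 1 + 1 = i + m + 3 - 1 by ring] at h ⊢
    rw [hb1]
    linarith

theorem frieze_col_antiperiodic (hb0 : ∀ i : ℤ, e i (i - 2) = 0)
    (hb1 : ∀ i : ℤ, e i (i - 1) = 1)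
    (hcol : ∀ i j : ℤ, e i j + e (i + 2) j = e i i * e (i + 1) j)
    (hrowanti : ∀ i j : ℤ, e (i + m + 3) j = -e i j) (i j : ℤ) :
    e i (j + m + 3) = -e i j := by
  refine congrFun (eq_of_recurrence (a := fun i => e i i)
    (u := fun i => e i (j + m + 3)) (v := fun i => -e i j)
    (fun i => hcol i _) (fun i => by linear_combination -hcol i j)
    (j₀ := j + 1 + m + 3) ?_ ?_) i
  · rw [hrowanti (j + 1) j, neg_neg, show j + 1 + m + 3 = j + m + 3 + 1 by ring]
    simpa using (hb1 (j + m + 3 + 1)).trans (hb1 (j + 1)).symm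
  · rw [show j + 1 + m + 3 + 1 = j + 2 + m + 3 by ring, hrowanti (j + 2) j, neg_neg,
      show j + 2 + m + 3 = j + m + 3 + 2 by ring]
    simpa using (hb0 (j + m + 3 + 2)).trans (hb0 (j + 2)).symm

theorem frieze_periodic_along_diagonals (hrowanti : ∀ i j : ℤ, e (i + m + 3) j = -e i j)
    (hcolanti : ∀ i j : ℤ, e i (j + m + 3) = -e i j) (d : ℤ) :
    Function.Periodic (fun i => e i (i + d)) (m + 3) := fun i => by
  simp only [← add_assoc, hrowanti, show i + m + 3 + d = i + d + m + 3 by ring, hcolanti,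
    neg_neg]

theorem frieze_row_pos_succ (hb0 : ∀ i : ℤ, e i (i - 2) = 0) (hb1 : ∀ i : ℤ, e i (i - 1) = 1)
    (hb2 : ∀ i : ℤ, e i (i + m) = 1)
    (huni : ∀ i j : ℤ, e i j * e (i + 1) (j + 1) - e i (j + 1) * e (i + 1) j = 1) {i : ℤ}
    (hi : ∀ j, i ≤ j → j ≤ i + m - 1 → 0 < e i j) :
    ∀ j, i + 1 ≤ j → j ≤ i + 1 + m - 1 → 0 < e (i + 1) j := by
  intro j hj₁ hj₂
  have hpos : ∀ k, i - 1 ≤ k → k ≤ j → 0 < e i k := by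
    intro k hk₁ hk₂
    rcases (show k = i - 1 ∨ k = i + m ∨ (i ≤ k ∧ k ≤ i + m - 1) by omega) with rfl | rfl | hk
    · rw [hb1]; exact one_pos
    · rw [hb2]; exact one_pos
    · exact hi k hk.1 hk.2
  have := mul_sub_mul_pos_of_unimodular (huni i) (by omega : i - 1 < j) hpos
  rwa [hb1, show i - 1 = i + 1 - 2 by ring, hb0, mul_zero, sub_zero, one_mul] at this

theorem frieze_interior_pos (hb0 : ∀ i : ℤ, e i (i - 2) = 0) (hb1 : ∀ i : ℤ, e i (i - 1) = 1)
    (hb2 : ∀ i : ℤ, e i (i + m) = 1)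
    (huni : ∀ i j : ℤ, e i j * e (i + 1) (j + 1) - e i (j + 1) * e (i + 1) j = 1)
    (hper : ∀ d : ℤ, Function.Periodic (fun i => e i (i + d)) (m + 3))
    (hrow₀ : ∀ j : ℤ, 0 ≤ j → j ≤ m - 1 → 0 < e 0 j) (i j : ℤ) (hij : i ≤ j)
    (hji : j ≤ i + m - 1) : 0 < e i j := by
  have hrows : ∀ r : ℤ, 0 ≤ r → ∀ j, r ≤ j → j ≤ r + m - 1 → 0 < e r j := by
    intro r hr
    induction r, hr using Int.leInduction with
    | base => exact fun j hj₁ hj₂ => hrow₀ j hj₁ (by omega)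
    | succ r _ ih => exact frieze_row_pos_succ hb0 hb1 hb2 huni ih
  have hshift := (hper (j - i)).map_emod i
  simp only [add_sub_cancel] at hshift
  rw [← hshift]
  exact hrows _ (Int.emod_nonneg i (by omega)) _ (by omega) (by omega)

theorem frieze_mem_bot_of_diag (hb0 : ∀ i : ℤ, e i (i - 2) = 0)
    (hb1 : ∀ i : ℤ, e i (i - 1) = 1)
    (hrow : ∀ i j : ℤ, e i j + e i (j + 2) = e (j + 2) (j + 2) * e i (j + 1)) {i j : ℤ}
    (hij : i - 1 ≤ j) (hdiag : ∀ k, i ≤ k → k ≤ j → e k k ∈ (⊥ : Subring ℝ)) :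
    e i j ∈ (⊥ : Subring ℝ) := by
  suffices h : ∀ j, i - 1 ≤ j → (∀ k, i ≤ k → k ≤ j → e k k ∈ (⊥ : Subring ℝ)) →
      e i (j - 1) ∈ (⊥ : Subring ℝ) ∧ e i j ∈ (⊥ : Subring ℝ) from (h j hij hdiag).2
  intro j hj
  induction j, hj using Int.leInduction with
  | base =>
    intro _
    rw [show i - 1 - 1 = i - 2 by ring, hb0, hb1]
    exact ⟨zero_mem _, one_mem _⟩
  | succ j _ ih =>
    intro hdiag
    obtain ⟨h₁, h₂⟩ := ih fun k hk₁ hk₂ => hdiag k hk₁ (by omega)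
    refine ⟨by rwa [add_sub_cancel_right], ?_⟩
    have hrec := hrow i (j - 1)
    rw [show j - 1 + 2 = j + 1 by ring, sub_add_cancel] at hrec
    rw [show e i (j + 1) = e (j + 1) (j + 1) * e i j - e i (j - 1) by linarith]
    exact sub_mem (mul_mem (hdiag _ (by omega) le_rfl) h₂) h₁

theorem frieze_diag_mem_bot_of_dvd
    (hrow : ∀ i j : ℤ, e i j + e i (j + 2) = e (j + 2) (j + 2) * e i (j + 1)) {y : ℤ → ℤ}
    (hy : ∀ k : ℤ, 0 ≤ k → k ≤ m + 1 → e 0 (k - 1) = y k)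
    (hdvd : ∀ k : ℤ, 1 ≤ k → k ≤ m → 0 < y k ∧ y k ∣ y (k - 1) + y (k + 1))
    {k : ℤ} (hk₁ : 1 ≤ k) (hk₂ : k ≤ m) : e k k ∈ (⊥ : Subring ℝ) := by
  obtain ⟨hyk, d, hd⟩ := hdvd k hk₁ hk₂
  have hprev := hy (k - 1) (by omega) (by omega)
  have hnext := hy (k + 1) (by omega) (by omega)
  rw [sub_sub, one_add_one_eq_two] at hprev
  rw [add_sub_cancel_right] at hnext
  have hrec := hrow 0 (k - 2)
  rw [sub_add_cancel, show k - 2 + 1 = k - 1 by ring, hprev, hnext,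
    hy k (by omega) (by omega)] at hrec
  have hd' : ((y (k - 1) + y (k + 1) : ℤ) : ℝ) = ((y k * d : ℤ) : ℝ) := congrArg _ hd
  push_cast at hd'
  refine Subring.mem_bot.2 ⟨d, mul_right_cancel₀ (by exact_mod_cast hyk.ne' : (y k : ℝ) ≠ 0) ?_⟩
  linear_combination hrec - hd'

theorem frieze_diag_mem_bot (hb0 : ∀ i : ℤ, e i (i - 2) = 0) (hb1 : ∀ i : ℤ, e i (i - 1) = 1)
    (hb2 : ∀ i : ℤ, e i (i + m) = 1) (hb3 : ∀ i : ℤ, e i (i + m + 1) = 0)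
    (hrow : ∀ i j : ℤ, e i j + e i (j + 2) = e (j + 2) (j + 2) * e i (j + 1))
    (hper : Function.Periodic (fun k => e k k) (m + 3)) {y : ℤ → ℤ}
    (hy : ∀ k : ℤ, 0 ≤ k → k ≤ m + 1 → e 0 (k - 1) = y k)
    (hdvd : ∀ k : ℤ, 1 ≤ k → k ≤ m → 0 < y k ∧ y k ∣ y (k - 1) + y (k + 1)) (k : ℤ) :
    e k k ∈ (⊥ : Subring ℝ) := by
  have hmid : ∀ {k : ℤ}, 1 ≤ k → k ≤ m → e k k ∈ (⊥ : Subring ℝ) :=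
    frieze_diag_mem_bot_of_dvd hrow hy hdvd
  have hwindow : ∀ k : ℤ, 0 ≤ k → k ≤ m + 2 → e k k ∈ (⊥ : Subring ℝ) := by
    intro k hk₀ hk₂
    rcases (show k = 0 ∨ (1 ≤ k ∧ k ≤ m) ∨ k = m + 1 ∨ k = m + 2 by omega)
      with rfl | hk | rfl | rfl
    · exact Subring.mem_bot.2 ⟨y 1, by simpa using (hy 1 (by omega) (by omega)).symm⟩
    · exact hmid hk.1 hk.2
    · have hrec := hrow 0 (m - 1)
      rw [show (m : ℤ) - 1 + 2 = 0 + m + 1 by ring, hb3, sub_add_cancel,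
        show e 0 m = 1 by simpa using hb2 0, hy m (by omega) (by omega),
        show (0 : ℤ) + m + 1 = m + 1 by ring] at hrec
      exact Subring.mem_bot.2 ⟨y m, by linarith⟩
    -- `e (m + 2) (m + 2) = e 1 m`, which the recurrence of row `1` builds from `e 1 1, …, e m m`
    · have hrec := hrow 1 m
      rw [show (m : ℤ) + 2 = 1 + m + 1 by ring, hb3, show (m : ℤ) + 1 = 1 + m by ring,
        hb2] at hrec
      rw [show e (m + 2) (m + 2) = e 1 m by rw [show (m : ℤ) + 2 = 1 + m + 1 by ring]; linarith]
      exact frieze_mem_bot_of_diag hb0 hb1 hrow (by omega) fun k hk₁ hk₂ => hmid hk₁ hk₂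
  rw [← hper.map_emod k]
  have := Int.emod_lt_of_pos k (by omega : (0 : ℤ) < m + 3)
  exact hwindow _ (Int.emod_nonneg _ (by omega)) (by omega)

theorem exists_row_zero_dvd_of_interior_pos_int (hb1 : ∀ i : ℤ, e i (i - 1) = 1)
    (hb2 : ∀ i : ℤ, e i (i + m) = 1)
    (hrow : ∀ i j : ℤ, e i j + e i (j + 2) = e (j + 2) (j + 2) * e i (j + 1))
    (hint : ∀ i j : ℤ, i ≤ j → j ≤ i + m - 1 → ∃ z : ℤ, 0 < z ∧ e i j = z) :
    ∃ y : ℤ → ℤ, (∀ k : ℤ, 0 ≤ k → k ≤ m + 1 → e 0 (k - 1) = y k) ∧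
      ∀ k : ℤ, 1 ≤ k → k ≤ m → 0 < y k ∧ y k ∣ y (k - 1) + y (k + 1) := by
  have hfloor : ∀ j : ℤ, -1 ≤ j → j ≤ m → e 0 j = ⌊e 0 j⌋ := by
    intro j hj₁ hj₂
    rcases (show j = -1 ∨ j = m ∨ (0 ≤ j ∧ j ≤ m - 1) by omega) with rfl | rfl | hj
    · simp [show e 0 (-1) = 1 by simpa using hb1 0]
    · simp [show e 0 m = 1 by simpa using hb2 0]
    · obtain ⟨z, -, hz⟩ := hint 0 j hj.1 (by omega)
      rw [hz, Int.floor_intCast]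
  refine ⟨fun k => ⌊e 0 (k - 1)⌋, fun k hk₀ hk₁ => hfloor _ (by omega) (by omega),
    fun k hk₁ hk₂ => ⟨?_, ?_⟩⟩
  · obtain ⟨z, hz, hzk⟩ := hint 0 (k - 1) (by omega) (by omega)
    simpa [hzk] using hz
  · obtain ⟨a, -, ha⟩ := hint k k le_rfl (by omega)
    have hrec := hrow 0 (k - 2)
    rw [sub_add_cancel, show k - 2 + 1 = k - 1 by ring, ha,
      hfloor (k - 2) (by omega) (by omega), hfloor k (by omega) (by omega),
      hfloor (k - 1) (by omega) (by omega)] at hrec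
    refine ⟨a, ?_⟩
    show ⌊e 0 (k - 1 - 1)⌋ + ⌊e 0 (k + 1 - 1)⌋ = ⌊e 0 (k - 1)⌋ * a
    rw [show k - 1 - 1 = k - 2 by ring, add_sub_cancel_right]
    exact_mod_cast hrec.trans (mul_comm _ _)

theorem interior_pos_int_of_row_zero_dvd (hb0 : ∀ i : ℤ, e i (i - 2) = 0)
    (hb1 : ∀ i : ℤ, e i (i - 1) = 1) (hb2 : ∀ i : ℤ, e i (i + m) = 1)
    (hb3 : ∀ i : ℤ, e i (i + m + 1) = 0)
    (huni : ∀ i j : ℤ, e i j * e (i + 1) (j + 1) - e i (j + 1) * e (i + 1) j = 1)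
    (hrow : ∀ i j : ℤ, e i j + e i (j + 2) = e (j + 2) (j + 2) * e i (j + 1))
    (hper : ∀ d : ℤ, Function.Periodic (fun i => e i (i + d)) (m + 3)) {y : ℤ → ℤ}
    (hy : ∀ k : ℤ, 0 ≤ k → k ≤ m + 1 → e 0 (k - 1) = y k)
    (hdvd : ∀ k : ℤ, 1 ≤ k → k ≤ m → 0 < y k ∧ y k ∣ y (k - 1) + y (k + 1))
    (i j : ℤ) (hij : i ≤ j) (hji : j ≤ i + m - 1) : ∃ z : ℤ, 0 < z ∧ e i j = z := by
  have hpos := frieze_interior_pos hb0 hb1 hb2 huni hper (fun j hj₀ hj₁ => by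
    rw [← add_sub_cancel_right j 1, hy _ (by omega) (by omega)]
    exact_mod_cast (hdvd _ (by omega) (by omega)).1) i j hij hji
  have hdiag := frieze_diag_mem_bot hb0 hb1 hb2 hb3 hrow (by simpa using hper 0) hy hdvd
  obtain ⟨z, hz⟩ := Subring.mem_bot.1 <|
    frieze_mem_bot_of_diag hb0 hb1 hrow (i := i) (j := j) (by omega) fun k _ _ => hdiag k
  rw [← hz] at hpos
  exact ⟨z, by exact_mod_cast hpos, hz.symm⟩

end Frieze

theorem coxeter_frieze_positive_integer_criterion_general (m : ℕ)
    (e : ℤ → ℤ → ℝ)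
    (hb0 : ∀ i : ℤ, e i (i - 2) = 0)
    (hb1 : ∀ i : ℤ, e i (i - 1) = 1)
    (hb2 : ∀ i : ℤ, e i (i + m) = 1)
    (hb3 : ∀ i : ℤ, e i (i + m + 1) = 0)
    (huni : ∀ i j : ℤ,
      e i j * e (i + 1) (j + 1) - e i (j + 1) * e (i + 1) j = 1)
    (htame : ∀ i j : ℤ,
      Matrix.det (Matrix.of fun r c : Fin 3 =>
        e (i + (r : ℕ)) (j + (c : ℕ))) = 0)
    (x : ℤ → ℝ) (hx : ∀ k : ℤ, x k = e 0 (k - 1)) :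
    (∀ i j : ℤ, i ≤ j → j ≤ i + (m : ℤ) - 1 →
        ∃ z : ℤ, 0 < z ∧ e i j = (z : ℝ)) ↔
    (∃ y : ℤ → ℤ,
      (∀ k : ℤ, 0 ≤ k → k ≤ (m : ℤ) + 1 → x k = (y k : ℝ)) ∧
      (∀ k : ℤ, 1 ≤ k → k ≤ (m : ℤ) → 0 < y k ∧ y k ∣ (y (k - 1) + y (k + 1)))) := by
  have hrow := frieze_row_recurrence hb0 hb1 huni htame
  have hrowanti := frieze_row_antiperiodic hb0 hb1 hb2 hb3 hrow
  have hper := frieze_periodic_along_diagonals hrowanti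
    (frieze_col_antiperiodic hb0 hb1 (frieze_col_recurrence hb0 hb1 hrow) hrowanti)
  simp only [hx]
  refine ⟨exists_row_zero_dvd_of_interior_pos_int hb1 hb2 hrow, ?_⟩
  rintro ⟨y, hy, hdvd⟩
  exact interior_pos_int_of_row_zero_dvd hb0 hb1 hb2 hb3 huni hrow hper hy hdvd

/-- **Coxeter's positivity criterion.**
Let `e` be a tame Coxeter frieze pattern of width `m ≥ 1` over `ℝ`, and let
`x k = e 0 (k-1)` be the entries of the `0`-th South-East diagonal
(`x 0 = x (m+1) = 1`).  All interior entries of the frieze are positive integers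
if and only if `x 1, …, x m` are positive integers such that `x k` divides
`x (k-1) + x (k+1)` in `ℤ` for every `1 ≤ k ≤ m`. -/
theorem coxeter_frieze_positive_integer_criterion (m : ℕ) (hm : 1 ≤ m)
    (e : ℤ → ℤ → ℝ)
    (hb0 : ∀ i : ℤ, e i (i - 2) = 0)
    (hb1 : ∀ i : ℤ, e i (i - 1) = 1)
    (hb2 : ∀ i : ℤ, e i (i + m) = 1)
    (hb3 : ∀ i : ℤ, e i (i + m + 1) = 0)
    (huni : ∀ i j : ℤ,
      e i j * e (i + 1) (j + 1) - e i (j + 1) * e (i + 1) j = 1)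
    (htame : ∀ i j : ℤ,
      Matrix.det (Matrix.of fun r c : Fin 3 =>
        e (i + (r : ℕ)) (j + (c : ℕ))) = 0)
    (x : ℤ → ℝ) (hx : ∀ k : ℤ, x k = e 0 (k - 1)) :
    (∀ i j : ℤ, i ≤ j → j ≤ i + (m : ℤ) - 1 →
        ∃ z : ℤ, 0 < z ∧ e i j = (z : ℝ)) ↔
    (∃ y : ℤ → ℤ,
      (∀ k : ℤ, 0 ≤ k → k ≤ (m : ℤ) + 1 → x k = (y k : ℝ)) ∧
      (∀ k : ℤ, 1 ≤ k → k ≤ (m : ℤ) → 0 < y k ∧ y k ∣ (y (k - 1) + y (k + 1)))) :=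
  coxeter_frieze_positive_integer_criterion_general m e hb0 hb1 hb2 hb3 huni htame x hx
end
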